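/- arXiv:1610.03048 — 7 statements merged into one kernel-verified Lean document; each statement's English description precedes it below -/
import Mathlib

section
/- For all natural numbers N ≥ 2, K ≥ 1, and L with 1 ≤ L < N^{K-1}, the rational number L · (N^K − 1) / ((N − 1) · N^{K-1}) is not an integer; consequently no PIR scheme with message length L < N^{K-1} can have download cost exactly L/C. -/
/-- For `2 ≤ N`, `1 ≤ K` and `1 ≤ L < N^{K-1}`, the rational number
`L·(N^K − 1)/((N − 1)·N^{K-1}) = L/C` is not an integer. -/
theorem short_message_download_not_integer (N K L : ℕ) (hN : 2 ≤ N) (hK : 1 ≤ K)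
    (hL : 1 ≤ L) (hLlt : L < N ^ (K - 1)) :
    ¬ ∃ z : ℤ, ((L : ℚ) * ((N : ℚ) ^ K - 1)) / (((N : ℚ) - 1) * (N : ℚ) ^ (K - 1)) = z := by
  rintro ⟨z, hz⟩
  have hN1 : (1:ℚ) < (N:ℚ) := by exact_mod_cast (by omega : 1 < N)
  have hden : ((N:ℚ) - 1) * (N:ℚ) ^ (K - 1) ≠ 0 := by
    apply mul_ne_zero
    · linarith
    · positivity
  rw [div_eq_iff hden] at hz
  have hzint : (L:ℤ) * ((N:ℤ) ^ K - 1) = z * (((N:ℤ) - 1) * (N:ℤ) ^ (K - 1)) := by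
    exact_mod_cast hz
  set S : ℤ := ∑ i ∈ Finset.range K, (N:ℤ) ^ i with hS
  have hgeom : S * ((N:ℤ) - 1) = (N:ℤ) ^ K - 1 := geom_sum_mul _ _
  have hNm1 : (N:ℤ) - 1 ≠ 0 := by
    have : (2:ℤ) ≤ N := by exact_mod_cast hN
    omega
  -- cancel (N-1)
  have hmain : (L:ℤ) * S = z * (N:ℤ) ^ (K - 1) := by
    have h2 : ((L:ℤ) * S) * ((N:ℤ) - 1) = (z * (N:ℤ) ^ (K - 1)) * ((N:ℤ) - 1) := by
      rw [mul_assoc, hgeom]; linarith [hzint]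
    exact mul_right_cancel₀ hNm1 h2
  -- S = 1 + N * t, hence coprime to N
  have hKsplit : K = (K - 1) + 1 := by omega
  have hSsplit : S = (N:ℤ) * (∑ i ∈ Finset.range (K - 1), (N:ℤ) ^ i) + 1 := by
    rw [hS, hKsplit, geom_sum_succ]; simp
  have hcop : IsCoprime ((N:ℤ)) S := by
    refine ⟨-(∑ i ∈ Finset.range (K - 1), (N:ℤ) ^ i), 1, ?_⟩
    rw [hSsplit]; ring
  have hcop' : IsCoprime ((N:ℤ) ^ (K - 1)) S := hcop.pow_left
  have hdvd : (N:ℤ) ^ (K - 1) ∣ (L:ℤ) * S := ⟨z, by linarith [hmain]⟩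
  have hdvdL : (N:ℤ) ^ (K - 1) ∣ (L:ℤ) := hcop'.dvd_of_dvd_mul_right hdvd
  have hLpos : (0:ℤ) < (L:ℤ) := by exact_mod_cast hL
  have := Int.le_of_dvd hLpos hdvdL
  have hlt : (L:ℤ) < (N:ℤ) ^ (K - 1) := by exact_mod_cast hLlt
  linarith
end

section
/- Let N ≥ 2 and K ≥ 1, and let v : {1,…,N} × {1,…,K} → ℕ satisfy v(1,1) = 1, v(m,1) = 0 for all m ∈ {2,…,N}, and v(m,k) = ∑_{m' ∈ {1,…,N}, m' ≠ m} v(m', k−1) for all m ∈ {1,…,N} and k ∈ {2,…,K}. Then for every k ∈ {1,…,K}, v(1,k) + (N−1) · v(2,k) = (N−1)^{k−1}. -/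
/-- For the Q-Gen recursion, `v(1,k) + (N−1)·v(2,k) = (N−1)^{k−1}`. -/
theorem qgen_weighted_sum (N K : ℕ) (hN : 2 ≤ N) (hK : 1 ≤ K)
    (v : ℕ → ℕ → ℕ)
    (h11 : v 1 1 = 1)
    (h1 : ∀ m, 2 ≤ m → m ≤ N → v m 1 = 0)
    (hrec : ∀ m k, 1 ≤ m → m ≤ N → 2 ≤ k → k ≤ K →
      v m k = ∑ m' ∈ (Finset.Icc 1 N).erase m, v m' (k - 1)) :
    ∀ k, 1 ≤ k → k ≤ K → v 1 k + (N - 1) * v 2 k = (N - 1) ^ (k - 1) := by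
  -- symmetry lemma
  have hsym : ∀ k, 1 ≤ k → k ≤ K → ∀ m, 2 ≤ m → m ≤ N → v m k = v 2 k := by
    intro k
    induction k using Nat.strong_induction_on with
    | _ k ih =>
      intro hk1 hkK m hm2 hmN
      rcases eq_or_lt_of_le hk1 with h | h
      · subst h
        rw [h1 m hm2 hmN, h1 2 le_rfl hN]
      · have hk2 : 2 ≤ k := h
        rw [hrec m k (by omega) hmN hk2 hkK, hrec 2 k (by omega) hN hk2 hkK]
        have e1 : v m (k - 1) + ∑ m' ∈ (Finset.Icc 1 N).erase m, v m' (k - 1)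
            = ∑ m' ∈ Finset.Icc 1 N, v m' (k - 1) :=
          Finset.add_sum_erase (Finset.Icc 1 N) (fun m' => v m' (k-1)) (by simp only [Finset.mem_Icc]; omega)
        have e2 : v 2 (k - 1) + ∑ m' ∈ (Finset.Icc 1 N).erase 2, v m' (k - 1)
            = ∑ m' ∈ Finset.Icc 1 N, v m' (k - 1) :=
          Finset.add_sum_erase (Finset.Icc 1 N) (fun m' => v m' (k-1)) (by simp only [Finset.mem_Icc]; omega)
        have e3 : v m (k - 1) = v 2 (k - 1) :=
          ih (k - 1) (by omega) (by omega) (by omega) m hm2 hmN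
        have := e1.trans e2.symm
        rw [e3] at this
        exact Nat.add_left_cancel this
  obtain ⟨n, rfl⟩ : ∃ n, N = 2 + n := ⟨N - 2, by omega⟩
  have hN1 : 2 + n - 1 = n + 1 := by omega
  rw [hN1]
  intro k hk1
  induction k, hk1 using Nat.le_induction with
  | base =>
    intro _
    rw [h11, h1 2 le_rfl hN]
    simp
  | succ k hk ih =>
    intro hK1
    specialize ih (by omega)
    have hv1 : v 1 (k + 1) = (n + 1) * v 2 k := by
      rw [hrec 1 (k + 1) (by omega) (by omega) (by omega) hK1]
      simp only [Nat.add_sub_cancel]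
      have hc : ∀ x ∈ (Finset.Icc 1 (2 + n)).erase 1, v x k = v 2 k := by
        intro x hx
        simp only [Finset.mem_erase, Finset.mem_Icc] at hx
        exact hsym k hk (by omega) x (by omega) (by omega)
      rw [Finset.sum_congr rfl hc, Finset.sum_const,
        Finset.card_erase_of_mem (by simp only [Finset.mem_erase, Finset.mem_Icc]; omega), Nat.card_Icc, smul_eq_mul]
      congr 1
    have hv2 : v 2 (k + 1) = v 1 k + n * v 2 k := by
      rw [hrec 2 (k + 1) (by omega) hN (by omega) hK1]
      simp only [Nat.add_sub_cancel]
      have h1mem : (1 : ℕ) ∈ (Finset.Icc 1 (2 + n)).erase 2 := by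
        simp only [Finset.mem_erase, Finset.mem_Icc]; omega
      rw [← Finset.add_sum_erase _ (fun m' => v m' k) h1mem]
      congr 1
      have hc : ∀ x ∈ ((Finset.Icc 1 (2 + n)).erase 2).erase 1, v x k = v 2 k := by
        intro x hx
        simp only [Finset.mem_erase, Finset.mem_Icc] at hx
        exact hsym k hk (by omega) x (by omega) (by omega)
      rw [Finset.sum_congr rfl hc, Finset.sum_const,
        Finset.card_erase_of_mem h1mem,
        Finset.card_erase_of_mem (by simp only [Finset.mem_erase, Finset.mem_Icc]; omega), Nat.card_Icc, smul_eq_mul]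
      congr 1
      omega
    obtain ⟨j, rfl⟩ : ∃ j, k = j + 1 := ⟨k - 1, by omega⟩
    simp only [Nat.add_sub_cancel] at ih ⊢
    rw [hv1, hv2, pow_succ', ← ih]
    ring
end

section
/- Let N ≥ 2 and K ≥ 1, and let v : {1,…,N} × {1,…,K} → ℕ satisfy v(1,1) = 1, v(m,1) = 0 for all m ∈ {2,…,N}, and v(m,k) = ∑_{m' ∈ {1,…,N}, m' ≠ m} v(m', k−1) for all m ∈ {1,…,N} and k ∈ {2,…,K}. Then ∑_{m=1}^{N} ∑_{k=1}^{K} v(m,k) · binom(K−1, k−1) = N^{K−1}; that is, the total number of desired message symbols retrieved by the Q-Gen scheme equals N^{K−1}. -/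
/-- The total number of desired message symbols retrieved by the Q-Gen scheme equals
`N^{K−1}`. -/
theorem qgen_message_length (N K : ℕ) (hN : 2 ≤ N) (hK : 1 ≤ K)
    (v : ℕ → ℕ → ℕ)
    (h11 : v 1 1 = 1)
    (h1 : ∀ m, 2 ≤ m → m ≤ N → v m 1 = 0)
    (hrec : ∀ m k, 1 ≤ m → m ≤ N → 2 ≤ k → k ≤ K →
      v m k = ∑ m' ∈ (Finset.Icc 1 N).erase m, v m' (k - 1)) :
    ∑ m ∈ Finset.Icc 1 N, ∑ k ∈ Finset.Icc 1 K, v m k * Nat.choose (K - 1) (k - 1)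
      = N ^ (K - 1) := by
  -- column sums
  have hS : ∀ k, 1 ≤ k → k ≤ K → ∑ m ∈ Finset.Icc 1 N, v m k = (N - 1) ^ (k - 1) := by
    intro k
    induction k with
    | zero => intro h; omega
    | succ n ih =>
      intro _ hkK
      rcases Nat.eq_or_lt_of_le (Nat.one_le_iff_ne_zero.mpr (Nat.succ_ne_zero n)) with h1n | h1n
      · -- k = 1
        have hn : n = 0 := by omega
        subst hn
        rw [Finset.sum_eq_single 1]
        · simpa using h11
        · intro m hm hne
          simp only [Finset.mem_Icc] at hm
          exact h1 m (by omega) hm.2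
        · intro h; simp at h; omega
      · -- k = n+1 ≥ 2
        have hn1 : 1 ≤ n := by omega
        have hSn := ih hn1 (by omega)
        have key : ∀ m ∈ Finset.Icc 1 N, v m (n + 1) =
            ∑ m' ∈ (Finset.Icc 1 N).erase m, v m' n := by
          intro m hm
          simp only [Finset.mem_Icc] at hm
          simpa using hrec m (n + 1) hm.1 hm.2 (by omega) hkK
        rw [Finset.sum_congr rfl key]
        have hT : (∑ m ∈ Finset.Icc 1 N, ∑ m' ∈ (Finset.Icc 1 N).erase m, v m' n)
            + ∑ m ∈ Finset.Icc 1 N, v m n = N * ∑ m ∈ Finset.Icc 1 N, v m n := by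
          rw [← Finset.sum_add_distrib]
          have : ∀ m ∈ Finset.Icc 1 N,
              (∑ m' ∈ (Finset.Icc 1 N).erase m, v m' n) + v m n
                = ∑ m' ∈ Finset.Icc 1 N, v m' n := by
            intro m hm
            exact Finset.sum_erase_add _ _ hm
          rw [Finset.sum_congr rfl this, Finset.sum_const, smul_eq_mul, Nat.card_Icc,
            Nat.add_sub_cancel]
        have hNS : N * ∑ m ∈ Finset.Icc 1 N, v m n
            = (N - 1) * (∑ m ∈ Finset.Icc 1 N, v m n) + ∑ m ∈ Finset.Icc 1 N, v m n := by
          have hle : (∑ m ∈ Finset.Icc 1 N, v m n) ≤ N * ∑ m ∈ Finset.Icc 1 N, v m n :=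
            Nat.le_mul_of_pos_left _ (by omega)
          rw [Nat.sub_one_mul, Nat.sub_add_cancel hle]
        have := hT.trans hNS
        have hTeq : (∑ m ∈ Finset.Icc 1 N, ∑ m' ∈ (Finset.Icc 1 N).erase m, v m' n)
            = (N - 1) * ∑ m ∈ Finset.Icc 1 N, v m n := Nat.add_right_cancel this
        rw [hTeq, hSn]
        have : (N - 1) * (N - 1) ^ (n - 1) = (N - 1) ^ n := by
          rw [← pow_succ']
          congr 1
          omega
        simpa using this
  rw [Finset.sum_comm]
  have step : ∀ k ∈ Finset.Icc 1 K,
      (∑ m ∈ Finset.Icc 1 N, v m k * Nat.choose (K - 1) (k - 1))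
        = (N - 1) ^ (k - 1) * Nat.choose (K - 1) (k - 1) := by
    intro k hk
    simp only [Finset.mem_Icc] at hk
    rw [← Finset.sum_mul, hS k hk.1 hk.2]
  rw [Finset.sum_congr rfl step]
  rw [show Finset.Icc 1 K = Finset.Ico 1 (K + 1) by rw [Finset.Ico_add_one_right_eq_Icc],
    Finset.sum_Ico_eq_sum_range]
  simp only [Nat.add_sub_cancel, Nat.add_sub_cancel_left]
  have : ((N - 1) + 1) ^ (K - 1) = ∑ i ∈ Finset.range K,
      (N - 1) ^ i * Nat.choose (K - 1) i := by
    rw [add_pow]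
    have hK1 : K - 1 + 1 = K := by omega
    rw [hK1]
    apply Finset.sum_congr rfl
    intro i _
    simp [mul_comm]
  have hN1 : (N - 1) + 1 = N := by omega
  rw [hN1] at this
  rw [← this]
end

section
/- Let N ≥ 2 and K ≥ 1, and let v : {1,…,N} × {1,…,K} → ℕ satisfy v(1,1) = 1, v(m,1) = 0 for all m ∈ {2,…,N}, and v(m,k) = ∑_{m' ∈ {1,…,N}, m' ≠ m} v(m', k−1) for all m ∈ {1,…,N} and k ∈ {2,…,K}. Then ∑_{m=1}^{N} ∑_{k=1}^{K} v(m,k) · binom(K, k) = 1 + N + N² + ⋯ + N^{K−1} = (N^K − 1)/(N − 1); that is, the total download cost D of the Q-Gen scheme satisfies D = N^{K−1}/C. -/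
/-- geometric sum identity in ℕ without subtraction -/
lemma geom_aux (N K : ℕ) (hN : 1 ≤ N) :
    (∑ j ∈ Finset.range K, N ^ j) * (N - 1) + 1 = N ^ K := by
  induction K with
  | zero => simp
  | succ K ih =>
    rw [Finset.sum_range_succ, add_mul, pow_succ]
    have h1 : N ^ K * (N - 1) + N ^ K = N ^ K * N := by
      rw [← Nat.mul_succ, Nat.succ_eq_add_one, Nat.sub_add_cancel hN]
    omega

/-- binomial identity: `∑_{k=1}^{K} (N-1)^{k-1} C(K,k) * (N-1) + 1 = N^K`. -/
lemma binom_aux (N K : ℕ) (hN : 1 ≤ N) (hK : 1 ≤ K) :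
    (∑ k ∈ Finset.Icc 1 K, (N - 1) ^ (k - 1) * Nat.choose K k) * (N - 1) + 1 = N ^ K := by
  have step1 : (∑ k ∈ Finset.Icc 1 K, (N - 1) ^ (k - 1) * Nat.choose K k) * (N - 1)
      = ∑ k ∈ Finset.Icc 1 K, (N - 1) ^ k * Nat.choose K k := by
    rw [Finset.sum_mul]
    apply Finset.sum_congr rfl
    intro k hk
    simp only [Finset.mem_Icc] at hk
    have : (N - 1) ^ (k - 1) * (N - 1) = (N - 1) ^ k := by
      rw [← pow_succ]
      congr 1
      omega
    rw [mul_right_comm, this]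
  rw [step1]
  have hbin : ∑ k ∈ Finset.range (K + 1), (N - 1) ^ k * Nat.choose K k = N ^ K := by
    have h := add_pow (N - 1) 1 K
    simp only [one_pow, mul_one] at h
    rw [Nat.sub_add_cancel hN] at h
    exact h.symm
  have hsplit : ∑ k ∈ Finset.range (K + 1), (N - 1) ^ k * Nat.choose K k
      = (N - 1) ^ 0 * Nat.choose K 0 + ∑ k ∈ Finset.Icc 1 K, (N - 1) ^ k * Nat.choose K k := by
    rw [Finset.range_eq_Ico]
    rw [show Finset.Ico 0 (K + 1) = Finset.Icc 0 K by rw [Finset.Ico_add_one_right_eq_Icc]]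
    rw [← Finset.sum_erase_add (Finset.Icc 0 K) _ (by simp : 0 ∈ Finset.Icc 0 K)]
    rw [show (Finset.Icc 0 K).erase 0 = Finset.Icc 1 K by
      ext x; simp [Finset.mem_erase, Finset.mem_Icc]; omega]
    ring
  simp only [pow_zero, Nat.choose_zero_right, one_mul] at hsplit
  omega

/-- The total download cost of the Q-Gen scheme equals
`1 + N + ⋯ + N^{K−1} = (N^K − 1)/(N − 1)`, i.e. `D = N^{K−1}/C`. -/
theorem qgen_download_cost (N K : ℕ) (hN : 2 ≤ N) (hK : 1 ≤ K)
    (v : ℕ → ℕ → ℕ)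
    (h11 : v 1 1 = 1)
    (h1 : ∀ m, 2 ≤ m → m ≤ N → v m 1 = 0)
    (hrec : ∀ m k, 1 ≤ m → m ≤ N → 2 ≤ k → k ≤ K →
      v m k = ∑ m' ∈ (Finset.Icc 1 N).erase m, v m' (k - 1)) :
    ∑ m ∈ Finset.Icc 1 N, ∑ k ∈ Finset.Icc 1 K, v m k * Nat.choose K k
        = ∑ j ∈ Finset.range K, N ^ j
    ∧ ∑ j ∈ Finset.range K, N ^ j = (N ^ K - 1) / (N - 1) := by
  set T : ℕ → ℕ := fun k => ∑ m ∈ Finset.Icc 1 N, v m k with hT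
  have hcard : (Finset.Icc 1 N).card = N := by simp
  have hT1 : T 1 = 1 := by
    show ∑ m ∈ Finset.Icc 1 N, v m 1 = 1
    rw [Finset.sum_eq_single 1]
    · exact h11
    · intro m hm hne
      simp only [Finset.mem_Icc] at hm
      exact h1 m (by omega) hm.2
    · intro h
      exfalso; apply h; simp; omega
  have hTrec : ∀ k, 2 ≤ k → k ≤ K → T k = (N - 1) * T (k - 1) := by
    intro k hk2 hkK
    have hstep : T k = ∑ m ∈ Finset.Icc 1 N, ∑ m' ∈ (Finset.Icc 1 N).erase m, v m' (k - 1) := by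
      apply Finset.sum_congr rfl
      intro m hm
      simp only [Finset.mem_Icc] at hm
      exact hrec m k hm.1 hm.2 hk2 hkK
    have hsum : T (k - 1) + ∑ m ∈ Finset.Icc 1 N, ∑ m' ∈ (Finset.Icc 1 N).erase m, v m' (k - 1)
        = N * T (k - 1) := by
      calc T (k-1) + ∑ m ∈ Finset.Icc 1 N, ∑ m' ∈ (Finset.Icc 1 N).erase m, v m' (k - 1)
          = ∑ m ∈ Finset.Icc 1 N, (v m (k-1) + ∑ m' ∈ (Finset.Icc 1 N).erase m, v m' (k - 1)) := by
            rw [Finset.sum_add_distrib]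
        _ = ∑ _m ∈ Finset.Icc 1 N, T (k-1) := by
            apply Finset.sum_congr rfl
            intro m hm
            exact Finset.add_sum_erase _ (fun m' => v m' (k-1)) hm
        _ = N * T (k-1) := by rw [Finset.sum_const, hcard, smul_eq_mul]
    have h2 : (N - 1) * T (k-1) + T (k-1) = N * T (k-1) := by
      rw [← Nat.succ_mul, Nat.succ_eq_add_one, Nat.sub_add_cancel (by omega)]
    omega
  -- T k = (N-1)^(k-1) for 1 ≤ k ≤ K
  have hTval : ∀ k, 1 ≤ k → k ≤ K → T k = (N - 1) ^ (k - 1) := by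
    intro k
    induction k with
    | zero => omega
    | succ k ih =>
      intro _ hkK
      rcases Nat.eq_or_lt_of_le (Nat.one_le_iff_ne_zero.mpr (Nat.succ_ne_zero k)) with h | h
      · have hk0 : k = 0 := by omega
        subst hk0
        simpa using hT1
      · have hk1 : 1 ≤ k := by omega
        rw [hTrec (k+1) (by omega) hkK]
        rw [Nat.add_sub_cancel, ih hk1 (by omega)]
        rw [← pow_succ']
        congr 1
        omega
  -- rewrite the main sum
  have hmain : ∑ m ∈ Finset.Icc 1 N, ∑ k ∈ Finset.Icc 1 K, v m k * Nat.choose K k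
      = ∑ k ∈ Finset.Icc 1 K, (N - 1) ^ (k - 1) * Nat.choose K k := by
    rw [Finset.sum_comm]
    apply Finset.sum_congr rfl
    intro k hk
    simp only [Finset.mem_Icc] at hk
    rw [← Finset.sum_mul]
    rw [show (∑ m ∈ Finset.Icc 1 N, v m k) = T k from rfl, hTval k hk.1 hk.2]
  have hgeom := geom_aux N K (by omega)
  have hbinom := binom_aux N K (by omega) hK
  constructor
  · rw [hmain]
    have hcancel : (∑ k ∈ Finset.Icc 1 K, (N - 1) ^ (k - 1) * Nat.choose K k) * (N - 1)
        = (∑ j ∈ Finset.range K, N ^ j) * (N - 1) := by omega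
    exact Nat.eq_of_mul_eq_mul_right (by omega) hcancel
  · exact Nat.geomSum_eq hN K
end

section
/- For all natural numbers N ≥ 2, K ≥ 1 and all natural numbers G₂ with G₂ < N^{K−1}, the inequality G₂ · N < G₂ · (N − 1) · r + 1 holds, where r = (N^K − 1)/((N − 1)·N^{K−1}). Equivalently, for any natural number G₁, the download cost G₁·N^{K−1}·r + G₂·N is strictly less than (G₁·N^{K−1} + G₂·(N−1))·r + 1. -/
/-! Writing `M = N^(K-1)`, so that `N^K = N * M`, one has `(N - 1) * r = N - 1/M`. Hence
`G₂ * (N - 1) * r = G₂ * N - G₂ / M`, and `G₂ / M < 1` because `G₂ < M`. The bound on the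
download cost is the same inequality with `G₁ * M * r` added to both sides. -/

section

variable {𝕜 : Type*} [Field 𝕜]

theorem sub_one_mul_pow_sub_one_div {x : 𝕜} (hx₀ : x ≠ 0) (hx₁ : x ≠ 1) {K : ℕ} (hK : 1 ≤ K) :
    (x - 1) * ((x ^ K - 1) / ((x - 1) * x ^ (K - 1))) = x - (x ^ (K - 1))⁻¹ := by
  obtain ⟨K, rfl⟩ := Nat.exists_eq_add_of_le' hK
  have hx₁' : x - 1 ≠ 0 := sub_ne_zero.mpr hx₁
  simp only [Nat.add_sub_cancel, pow_succ]
  field_simp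

variable [LinearOrder 𝕜] [IsStrictOrderedRing 𝕜]

theorem mul_lt_mul_sub_one_mul_pow_sub_one_div_add_one {x g : 𝕜} (hx : 1 < x) {K : ℕ}
    (hK : 1 ≤ K) (hg : g < x ^ (K - 1)) :
    g * x < g * (x - 1) * ((x ^ K - 1) / ((x - 1) * x ^ (K - 1))) + 1 := by
  have hM : 0 < x ^ (K - 1) := pow_pos (zero_lt_one.trans hx) _
  have hgM : g / x ^ (K - 1) < 1 := (div_lt_one hM).mpr hg
  rw [mul_assoc, sub_one_mul_pow_sub_one_div (zero_lt_one.trans hx).ne' hx.ne' hK, mul_sub,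
    ← div_eq_mul_inv]
  linarith

end

/-- Case `L₂ = 0` of the achievability proof: for `G₂ < N^{K−1}`,
`G₂·N < G₂·(N−1)·r + 1` where `r = 1/C`; equivalently the achieved download cost
`G₁·N^{K−1}·r + G₂·N` is strictly less than `L·r + 1` with `L = G₁·N^{K−1} + G₂·(N−1)`. -/
theorem download_gap_case_L2_zero (N K G₂ : ℕ) (hN : 2 ≤ N) (hK : 1 ≤ K)
    (hG₂ : G₂ < N ^ (K - 1)) :
    (G₂ : ℚ) * N
        < (G₂ : ℚ) * ((N : ℚ) - 1)
            * (((N : ℚ) ^ K - 1) / (((N : ℚ) - 1) * (N : ℚ) ^ (K - 1))) + 1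
    ∧ ∀ G₁ : ℕ,
        (G₁ : ℚ) * (N : ℚ) ^ (K - 1)
            * (((N : ℚ) ^ K - 1) / (((N : ℚ) - 1) * (N : ℚ) ^ (K - 1))) + (G₂ : ℚ) * N
          < ((G₁ : ℚ) * (N : ℚ) ^ (K - 1) + (G₂ : ℚ) * ((N : ℚ) - 1))
            * (((N : ℚ) ^ K - 1) / (((N : ℚ) - 1) * (N : ℚ) ^ (K - 1))) + 1 := by
  have hN' : (1 : ℚ) < N := by exact_mod_cast hN
  have hG₂' : (G₂ : ℚ) < (N : ℚ) ^ (K - 1) := by exact_mod_cast hG₂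
  have gap := mul_lt_mul_sub_one_mul_pow_sub_one_div_add_one hN' hK hG₂'
  exact ⟨gap, fun G₁ => by linarith⟩
end

section
/- For all natural numbers N ≥ 2, K ≥ 1, G₂, and L₂ with L₂ ≥ 1 and G₂·(N − 1) + L₂ ≤ N^{K−1} − 1, the inequality G₂·(N − 1) < L₂·(N^{K−1} − 1) holds; consequently G₂·N + L₂ < (G₂·(N − 1) + L₂) · r, where r = (N^K − 1)/((N − 1)·N^{K−1}). -/
/-- Case `L₂ ≥ 1` of the achievability proof: if `G₂·(N−1) + L₂ ≤ N^{K−1} − 1`, then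
`G₂·(N−1) < L₂·(N^{K−1} − 1)`, and consequently `G₂·N + L₂ < (G₂·(N−1) + L₂)·r`
where `r = 1/C`. -/
theorem download_gap_case_L2_pos (N K G₂ L₂ : ℕ) (hN : 2 ≤ N) (hK : 1 ≤ K)
    (hL₂ : 1 ≤ L₂) (hle : G₂ * (N - 1) + L₂ ≤ N ^ (K - 1) - 1) :
    G₂ * (N - 1) < L₂ * (N ^ (K - 1) - 1)
    ∧ (G₂ : ℚ) * N + (L₂ : ℚ)
        < ((G₂ : ℚ) * ((N : ℚ) - 1) + (L₂ : ℚ))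
            * (((N : ℚ) ^ K - 1) / (((N : ℚ) - 1) * (N : ℚ) ^ (K - 1))) := by
  have hM : 2 ≤ N ^ (K - 1) := by omega
  have h1 : G₂ * (N - 1) < L₂ * (N ^ (K - 1) - 1) := by
    calc G₂ * (N - 1) < N ^ (K - 1) - 1 := by omega
    _ ≤ L₂ * (N ^ (K - 1) - 1) := Nat.le_mul_of_pos_left _ hL₂
  refine ⟨h1, ?_⟩
  have hq : (G₂ : ℚ) * ((N : ℚ) - 1) < (L₂ : ℚ) * ((N : ℚ) ^ (K - 1) - 1) := by
    have h1' : ((G₂ * (N - 1) : ℕ) : ℚ) < ((L₂ * (N ^ (K - 1) - 1) : ℕ) : ℚ) := by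
      exact_mod_cast h1
    push_cast [Nat.cast_sub (by omega : 1 ≤ N),
      Nat.cast_sub (by omega : 1 ≤ N ^ (K - 1))] at h1'
    linarith [h1']
  have hNpos : (0 : ℚ) < (N : ℚ) - 1 := by
    have : (2 : ℚ) ≤ (N : ℚ) := by exact_mod_cast hN
    linarith
  have hPpos : (0 : ℚ) < (N : ℚ) ^ (K - 1) := by positivity
  have hd : (0 : ℚ) < ((N : ℚ) - 1) * (N : ℚ) ^ (K - 1) := by positivity
  rw [← mul_div_assoc, lt_div_iff₀ hd]
  have hNK : (N : ℚ) ^ K = (N : ℚ) * (N : ℚ) ^ (K - 1) := by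
    conv_lhs => rw [show K = (K - 1) + 1 from by omega]
    ring
  rw [hNK]
  nlinarith [hq, hPpos]
end

section
/- Let N ≥ 2, K ≥ 1, and L ≥ 1 be natural numbers. Define G₁ = ⌊L / N^{K−1}⌋ and L₁ = L − G₁·N^{K−1}, then G₂ = ⌊L₁ / (N−1)⌋ and L₂ = L₁ − G₂·(N−1). Define D = G₁·(N^K − 1)/(N − 1) + G₂·N if L₂ = 0, and D = G₁·(N^K − 1)/(N − 1) + G₂·N + L₂ + 1 if L₂ ≥ 1. Then D is a natural number and D = ⌈L · (N^K − 1) / ((N − 1)·N^{K−1})⌉ = ⌈L/C⌉. -/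
lemma aux_mod_sub (L P : ℕ) (hP : 0 < P) :
    L - L / P * P = L % P ∧ L - L / P * P < P := by
  have h := Nat.div_add_mod' L P
  have hm := Nat.mod_lt L hP
  omega

set_option maxHeartbeats 800000 in
/-- The concatenated achievable scheme: with `G₁ = ⌊L/N^{K−1}⌋`, `L₁ = L − G₁·N^{K−1}`,
`G₂ = ⌊L₁/(N−1)⌋`, `L₂ = L₁ − G₂·(N−1)`, the download cost
`D = G₁·(N^K−1)/(N−1) + G₂·N` (if `L₂ = 0`) or `D = G₁·(N^K−1)/(N−1) + G₂·N + L₂ + 1`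
(if `L₂ ≥ 1`) is a natural number equal to `⌈L/C⌉`. -/
theorem concatenated_scheme_download_cost (N K L : ℕ) (hN : 2 ≤ N) (hK : 1 ≤ K)
    (hL : 1 ≤ L) :
    let G₁ := L / N ^ (K - 1)
    let L₁ := L - G₁ * N ^ (K - 1)
    let G₂ := L₁ / (N - 1)
    let L₂ := L₁ - G₂ * (N - 1)
    let D : ℕ := if L₂ = 0 then G₁ * (N ^ K - 1) / (N - 1) + G₂ * N
      else G₁ * (N ^ K - 1) / (N - 1) + G₂ * N + L₂ + 1
    (D : ℤ) = ⌈((L : ℚ) * ((N : ℚ) ^ K - 1)) / (((N : ℚ) - 1) * (N : ℚ) ^ (K - 1))⌉ := by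
  intro G₁ L₁ G₂ L₂ D
  have hP : 1 ≤ N ^ (K - 1) := Nat.one_le_pow _ _ (by omega)
  have hdm1 := Nat.div_add_mod' L (N ^ (K - 1))
  have hmod1 : L₁ = L % N ^ (K - 1) := (aux_mod_sub L _ (by omega)).1
  have hL1lt : L₁ < N ^ (K - 1) := (aux_mod_sub L _ (by omega)).2
  have h1 : G₁ * N ^ (K - 1) ≤ L := Nat.div_mul_le_self _ _
  have hdm2 := Nat.div_add_mod' L₁ (N - 1)
  have hmod2 : L₂ = L₁ % (N - 1) := (aux_mod_sub L₁ _ (by omega)).1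
  have hL2lt : L₂ < N - 1 := (aux_mod_sub L₁ _ (by omega)).2
  have h2 : G₂ * (N - 1) ≤ L₁ := Nat.div_mul_le_self _ _
  have hdvd : (N - 1) ∣ N ^ K - 1 := by
    have := Nat.sub_dvd_pow_sub_pow N 1 K
    simpa using this
  set S : ℕ := (N ^ K - 1) / (N - 1) with hSdef
  have hS : (N - 1) * S = N ^ K - 1 := Nat.mul_div_cancel' hdvd
  have hDiv : G₁ * (N ^ K - 1) / (N - 1) = G₁ * S := Nat.mul_div_assoc _ hdvd
  have hNK : N ^ K = N * N ^ (K - 1) := by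
    conv_lhs => rw [show K = K - 1 + 1 by omega]
    ring
  have hNK1 : 1 ≤ N ^ K := Nat.one_le_pow _ _ (by omega)
  have hS' : (N - 1) * S + 1 = N * N ^ (K - 1) := by omega
  -- rational facts
  set p : ℚ := (N : ℚ) ^ (K - 1) with hpdef
  have hppos : (0:ℚ) < p := by positivity
  have hpc : ((N ^ (K - 1) : ℕ) : ℚ) = p := by push_cast [hpdef]; ring
  have hp1 : (1:ℚ) ≤ p := by rw [← hpc]; exact_mod_cast hP
  have hNq : (2:ℚ) ≤ (N:ℚ) := by exact_mod_cast hN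
  have eS : ((N:ℚ) - 1) * S = (N:ℚ) * p - 1 := by
    have ecast := congrArg (Nat.cast : ℕ → ℚ) hS'
    push_cast [Nat.cast_sub (show 1 ≤ N by omega)] at ecast
    rw [hpdef]; push_cast at ecast ⊢; linarith
  have eL : (L:ℚ) = G₁ * p + L₁ := by
    have := congrArg (Nat.cast : ℕ → ℚ) (Nat.sub_add_cancel h1)
    push_cast at this; rw [hpdef]; push_cast; linarith
  have eL1 : (L₁:ℚ) = G₂ * ((N:ℚ) - 1) + L₂ := by
    have := congrArg (Nat.cast : ℕ → ℚ) (Nat.sub_add_cancel h2)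
    push_cast [Nat.cast_sub (show 1 ≤ N by omega)] at this; linarith
  have bL1 : (L₁:ℚ) ≤ p - 1 := by
    have h : L₁ + 1 ≤ N ^ (K - 1) := hL1lt
    have := (Nat.cast_le (α := ℚ)).mpr h
    push_cast at this; rw [hpdef]; push_cast; linarith
  have bL2 : (L₂:ℚ) ≤ (N:ℚ) - 2 := by
    have h : L₂ + 2 ≤ N := by omega
    have := (Nat.cast_le (α := ℚ)).mpr h
    push_cast at this; linarith
  have hden : (0:ℚ) < ((N:ℚ) - 1) * p := by nlinarith
  have hnum : (L:ℚ) * ((N:ℚ) ^ K - 1) = (L:ℚ) * ((N:ℚ) * p - 1) := by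
    have hq : ((N:ℚ)) ^ K = (N:ℚ) * p := by
      rw [hpdef, ← pow_succ']
      congr 1; omega
    rw [hq]
  have key : (L:ℚ) * ((N:ℚ) * p - 1)
      = ((G₁:ℚ) * S + G₂ * N + L₂) * (((N:ℚ) - 1) * p) + ((L₂:ℚ) * p - L₁) := by
    linear_combination ((N:ℚ) * p - 1) * eL + ((N:ℚ) * p) * eL1 - ((G₁:ℚ) * p) * eS
  have hL1nn : (0:ℚ) ≤ (L₁:ℚ) := Nat.cast_nonneg _
  rw [eq_comm, Int.ceil_eq_iff, hnum]
  constructor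
  · -- lower bound : (D:ℚ) - 1 < x
    rw [lt_div_iff₀ hden]
    by_cases hc : L₂ = 0
    · have hD : ((D:ℤ):ℚ) = G₁ * S + G₂ * N := by
        simp only [D, if_pos hc, hDiv]; push_cast; ring
      have hc' : (L₂:ℚ) = 0 := by exact_mod_cast hc
      rw [hD]
      nlinarith [key, bL1, mul_nonneg (by linarith : (0:ℚ) ≤ (N:ℚ) - 2) hppos.le]
    · have hD : ((D:ℤ):ℚ) = G₁ * S + G₂ * N + L₂ + 1 := by
        simp only [D, if_neg hc, hDiv]; push_cast; ring
      have hc1 : (1:ℚ) ≤ (L₂:ℚ) := by exact_mod_cast Nat.one_le_iff_ne_zero.mpr hc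
      rw [hD]
      nlinarith [key, bL1, mul_nonneg (by linarith : (0:ℚ) ≤ (L₂:ℚ) - 1) hppos.le]
  · -- upper bound : x ≤ D
    rw [div_le_iff₀ hden]
    by_cases hc : L₂ = 0
    · have hD : ((D:ℤ):ℚ) = G₁ * S + G₂ * N := by
        simp only [D, if_pos hc, hDiv]; push_cast; ring
      have hc' : (L₂:ℚ) = 0 := by exact_mod_cast hc
      rw [hD]
      nlinarith [key, hL1nn]
    · have hD : ((D:ℤ):ℚ) = G₁ * S + G₂ * N + L₂ + 1 := by
        simp only [D, if_neg hc, hDiv]; push_cast; ring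
      rw [hD]
      nlinarith [key, hL1nn, mul_nonneg (by linarith [bL2] : (0:ℚ) ≤ (N:ℚ) - 1 - L₂) hppos.le]
end
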